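/- Let C be a bivariate copula admitting a tail dependence function Λ. Define the maximal tail dependence coefficient χ̄ = sup_{b ∈ (0,∞)} Λ(b, 1/b); the maximal intermediate tail dependence coefficient χ̄* = χ̄ / m̄, where m̄ = sup{ min(a, 1/a) : a ∈ argmax_{b ∈ (0,∞)} Λ(b,1/b) } (the supremum defining χ̄ is attained and m̄ > 0, so χ̄* is well defined); the maximal normalized tail dependence coefficient κ̄ = sup_{b ∈ (0,∞)} Λ(b,1/b)/min(b,1/b); and the maximal tail dependence measure λ̄ = sup_μ λ_μ(C), the supremum over all tail generating measures μ. Then Λ(1,1) ≤ χ̄ ≤ χ̄* ≤ κ̄ = λ̄. -/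

import Mathlib

open MeasureTheory Filter Set

/-- A bivariate copula: `C : [0,1]² → [0,1]` with the grounded/marginal conditions and
the 2-increasing property. -/
def IsCopula (C : ℝ → ℝ → ℝ) : Prop :=
  (∀ u ∈ Icc (0:ℝ) 1, ∀ v ∈ Icc (0:ℝ) 1, C u v ∈ Icc (0:ℝ) 1) ∧
  (∀ u ∈ Icc (0:ℝ) 1, C u 0 = 0 ∧ C 0 u = 0 ∧ C u 1 = u ∧ C 1 u = u) ∧
  (∀ u u' v v' : ℝ, u ∈ Icc (0:ℝ) 1 → u' ∈ Icc (0:ℝ) 1 →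
    v ∈ Icc (0:ℝ) 1 → v' ∈ Icc (0:ℝ) 1 → u ≤ u' → v ≤ v' →
    0 ≤ C u' v' - C u' v - C u v' + C u v)

/-- `Λ` is the tail dependence function of `C`:
`Λ(u,v) = lim_{p↓0} C(pu,pv)/p` for every `(u,v) ∈ [0,∞)²`. -/
def HasTDF (C Λ : ℝ → ℝ → ℝ) : Prop :=
  ∀ u v : ℝ, 0 ≤ u → 0 ≤ v →
    Tendsto (fun p : ℝ => C (p * u) (p * v) / p)
      (nhdsWithin (0:ℝ) (Ioi 0)) (nhds (Λ u v))

/-- A tail generating measure: a Borel probability measure on `[0,1]²` whose mass is not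
concentrated on `{u = 0} ∪ {v = 0}`. -/
def IsTailGenMeasure (μ : Measure (ℝ × ℝ)) : Prop :=
  IsProbabilityMeasure μ ∧
  μ ((Icc (0:ℝ) 1 ×ˢ Icc (0:ℝ) 1)ᶜ) = 0 ∧
  μ {q : ℝ × ℝ | q.1 = 0 ∨ q.2 = 0} < 1

/-- The μ-tail dependence measure: `λ_μ = (∫ Λ dμ) / (∫ min dμ)`, applied to
the tail dependence function `Λ` of the copula. -/
noncomputable def tdm (Λ : ℝ → ℝ → ℝ) (μ : Measure (ℝ × ℝ)) : ℝ :=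
  (∫ q, Λ q.1 q.2 ∂μ) / (∫ q : ℝ × ℝ, min q.1 q.2 ∂μ)

/-!
Since a copula is 1-Lipschitz in each variable and lies below `min`, its tail dependence function
`Λ` is Lipschitz, positively homogeneous of degree one and satisfies `0 ≤ Λ ≤ min`. So
`f(b) = Λ(b, 1/b)` is continuous and bounded by `min(b, 1/b)`, which vanishes at both ends of
`(0, ∞)`; hence `f` attains `χ̄`, and `Λ(1,1) ≤ χ̄ ≤ χ̄/m̄ ≤ κ̄` follows from `m̄ ≤ 1`.
By homogeneity `Λ(u,v)/min(u,v)` is constant along rays, and every ray in the open quadrant meets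
the hyperbola `v = 1/u`. Thus `Λ ≤ κ̄ · min` on the quadrant, which integrates to `λ_μ ≤ κ̄`, while
the Dirac mass at a point of `(0,1]²` on the ray through `(b, 1/b)` has `λ_μ = f(b)/min(b, 1/b)`.
-/

open Topology

variable {C Λ : ℝ → ℝ → ℝ}

namespace IsCopula

lemma sub_mem_Icc_left (hC : IsCopula C) {u u' v : ℝ} (hu : u ∈ Icc (0:ℝ) 1)
    (hu' : u' ∈ Icc (0:ℝ) 1) (hv : v ∈ Icc (0:ℝ) 1) (h : u ≤ u') :
    C u' v - C u v ∈ Icc 0 (u' - u) := by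
  have hlow := hC.2.2 u u' 0 v hu hu' (left_mem_Icc.2 zero_le_one) hv h hv.1
  have hupp := hC.2.2 u u' v 1 hu hu' hv (right_mem_Icc.2 zero_le_one) h hv.2
  obtain ⟨hu0, -, hu1, -⟩ := hC.2.1 u hu
  obtain ⟨hu'0, -, hu'1, -⟩ := hC.2.1 u' hu'
  constructor <;> linarith

lemma sub_mem_Icc_right (hC : IsCopula C) {u v v' : ℝ} (hu : u ∈ Icc (0:ℝ) 1)
    (hv : v ∈ Icc (0:ℝ) 1) (hv' : v' ∈ Icc (0:ℝ) 1) (h : v ≤ v') :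
    C u v' - C u v ∈ Icc 0 (v' - v) := by
  have hlow := hC.2.2 0 u v v' (left_mem_Icc.2 zero_le_one) hu hv hv' hu.1 h
  have hupp := hC.2.2 u 1 v v' hu (right_mem_Icc.2 zero_le_one) hv hv' hu.2 h
  obtain ⟨-, hv0, -, hv1⟩ := hC.2.1 v hv
  obtain ⟨-, hv'0, -, hv'1⟩ := hC.2.1 v' hv'
  constructor <;> linarith

lemma le_left (hC : IsCopula C) {u v : ℝ} (hu : u ∈ Icc (0:ℝ) 1) (hv : v ∈ Icc (0:ℝ) 1) :
    C u v ≤ u := by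
  have := (hC.sub_mem_Icc_right hu hv (right_mem_Icc.2 zero_le_one) hv.2).1
  linarith [(hC.2.1 u hu).2.2.1]

lemma le_right (hC : IsCopula C) {u v : ℝ} (hu : u ∈ Icc (0:ℝ) 1) (hv : v ∈ Icc (0:ℝ) 1) :
    C u v ≤ v := by
  have := (hC.sub_mem_Icc_left hu (right_mem_Icc.2 zero_le_one) hv hu.2).1
  linarith [(hC.2.1 v hv).2.2.2]

lemma abs_sub_le_left (hC : IsCopula C) {u u' v : ℝ} (hu : u ∈ Icc (0:ℝ) 1)
    (hu' : u' ∈ Icc (0:ℝ) 1) (hv : v ∈ Icc (0:ℝ) 1) : |C u v - C u' v| ≤ |u - u'| := by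
  rcases le_total u u' with h | h
  · have := hC.sub_mem_Icc_left hu hu' hv h
    rw [abs_sub_comm, abs_sub_comm u]
    exact abs_le_abs_of_nonneg this.1 this.2
  · have := hC.sub_mem_Icc_left hu' hu hv h
    exact abs_le_abs_of_nonneg this.1 this.2

lemma abs_sub_le_right (hC : IsCopula C) {u v v' : ℝ} (hu : u ∈ Icc (0:ℝ) 1)
    (hv : v ∈ Icc (0:ℝ) 1) (hv' : v' ∈ Icc (0:ℝ) 1) : |C u v - C u v'| ≤ |v - v'| := by
  rcases le_total v v' with h | h
  · have := hC.sub_mem_Icc_right hu hv hv' h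
    rw [abs_sub_comm, abs_sub_comm v]
    exact abs_le_abs_of_nonneg this.1 this.2
  · have := hC.sub_mem_Icc_right hu hv' hv h
    exact abs_le_abs_of_nonneg this.1 this.2

lemma abs_sub_le (hC : IsCopula C) {u u' v v' : ℝ} (hu : u ∈ Icc (0:ℝ) 1)
    (hu' : u' ∈ Icc (0:ℝ) 1) (hv : v ∈ Icc (0:ℝ) 1) (hv' : v' ∈ Icc (0:ℝ) 1) :
    |C u v - C u' v'| ≤ |u - u'| + |v - v'| :=
  calc |C u v - C u' v'| ≤ |C u v - C u' v| + |C u' v - C u' v'| := _root_.abs_sub_le _ _ _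
    _ ≤ |u - u'| + |v - v'| :=
      add_le_add (hC.abs_sub_le_left hu hu' hv) (hC.abs_sub_le_right hu' hv hv')

end IsCopula

lemma eventually_mul_mem_Icc {u : ℝ} (hu : 0 ≤ u) :
    ∀ᶠ p in 𝓝[>] (0:ℝ), p * u ∈ Icc (0:ℝ) 1 := by
  have hlim : Tendsto (fun p : ℝ => p * u) (𝓝[>] 0) (𝓝 0) := by
    simpa using ((continuous_mul_const u).tendsto 0).mono_left nhdsWithin_le_nhds
  filter_upwards [self_mem_nhdsWithin, hlim.eventually (gt_mem_nhds zero_lt_one)] with p hp hp1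
  exact ⟨mul_nonneg (le_of_lt hp) hu, hp1.le⟩

lemma Continuous.exists_forall_ge_of_tendsto_cocompact_zero {X : Type*} [TopologicalSpace X]
    [Nonempty X] {g : X → ℝ} (hg : Continuous g) (hg0 : 0 ≤ g)
    (hlim : Tendsto g (cocompact X) (𝓝 0)) : ∃ x, ∀ y, g y ≤ g x := by
  by_cases hpos : ∃ x₀, 0 < g x₀
  · obtain ⟨x₀, hx₀⟩ := hpos
    exact hg.exists_forall_ge' x₀ ((hlim.eventually (gt_mem_nhds hx₀)).mono fun _ h => h.le)
  · simp only [not_exists, not_lt] at hpos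
    obtain ⟨x⟩ := ‹Nonempty X›
    exact ⟨x, fun y => (hpos y).trans (hg0 x)⟩

lemma min_exp_one_div_exp_le (t : ℝ) : min (Real.exp t) (1 / Real.exp t) ≤ Real.exp (-|t|) := by
  rw [one_div, ← Real.exp_neg]
  rcases le_total 0 t with ht | ht
  · rw [abs_of_nonneg ht]; exact min_le_right _ _
  · rw [abs_of_nonpos ht, neg_neg]; exact min_le_left _ _

lemma min_one_div_le_one {b : ℝ} (hb : 0 < b) : min b (1 / b) ≤ 1 := by
  rcases le_total b 1 with h | h
  · exact (min_le_left _ _).trans h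
  · exact (min_le_right _ _).trans (div_le_one_of_le₀ h hb.le)

lemma exists_eq_mul_and_eq_mul_one_div {u v : ℝ} (hu : 0 < u) (hv : 0 < v) :
    ∃ t b : ℝ, 0 < t ∧ 0 < b ∧ u = t * b ∧ v = t * (1 / b) := by
  have hsu := Real.sqrt_pos.2 hu
  have hsv := Real.sqrt_pos.2 hv
  refine ⟨√u * √v, √u / √v, by positivity, by positivity, ?_, ?_⟩
  · field_simp; rw [Real.sq_sqrt hu.le]
  · field_simp; rw [Real.sq_sqrt hv.le]

namespace IsTailGenMeasure

variable {μ : Measure (ℝ × ℝ)}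

lemma ae_mem (hμ : IsTailGenMeasure μ) : ∀ᵐ q ∂μ, q ∈ Icc (0:ℝ) 1 ×ˢ Icc (0:ℝ) 1 :=
  ae_iff.2 hμ.2.1

lemma integrable_min (hμ : IsTailGenMeasure μ) : Integrable (fun q : ℝ × ℝ => min q.1 q.2) μ := by
  have := hμ.1
  refine Integrable.mono' (integrable_const 1)
    (continuous_fst.min continuous_snd).aestronglyMeasurable ?_
  filter_upwards [hμ.ae_mem] with q hq
  rw [Real.norm_eq_abs, abs_of_nonneg (le_min hq.1.1 hq.2.1)]
  exact (min_le_left _ _).trans hq.1.2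

lemma integral_min_pos (hμ : IsTailGenMeasure μ) : 0 < ∫ q, min q.1 q.2 ∂μ := by
  have := hμ.1
  have hnonneg : 0 ≤ᵐ[μ] fun q : ℝ × ℝ => min q.1 q.2 := by
    filter_upwards [hμ.ae_mem] with q hq
    exact le_min hq.1.1 hq.2.1
  rw [integral_pos_iff_support_of_nonneg_ae hnonneg hμ.integrable_min, pos_iff_ne_zero]
  intro hzero
  have hcover : (univ : Set (ℝ × ℝ)) ≤ᵐ[μ]
      ((Function.support fun q : ℝ × ℝ => min q.1 q.2) ∪ {q | q.1 = 0 ∨ q.2 = 0} :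
        Set (ℝ × ℝ)) := by
    filter_upwards [hμ.ae_mem] with q hq _
    by_cases hq0 : q.1 = 0 ∨ q.2 = 0
    · exact Or.inr hq0
    · push Not at hq0
      exact Or.inl (lt_min (hq.1.1.lt_of_ne' hq0.1) (hq.2.1.lt_of_ne' hq0.2)).ne'
  have := (measure_mono_ae hcover).trans (measure_union_le _ _)
  rw [measure_univ, hzero, zero_add] at this
  exact hμ.2.2.not_ge this

lemma tdm_le {Λ : ℝ → ℝ → ℝ} (hμ : IsTailGenMeasure μ) {K : ℝ}
    (hΛ₀ : ∀ q ∈ Icc (0:ℝ) 1 ×ˢ Icc (0:ℝ) 1, 0 ≤ Λ q.1 q.2)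
    (hΛK : ∀ q ∈ Icc (0:ℝ) 1 ×ˢ Icc (0:ℝ) 1, Λ q.1 q.2 ≤ K * min q.1 q.2) : tdm Λ μ ≤ K := by
  have hint : ∫ q, Λ q.1 q.2 ∂μ ≤ ∫ q, K * min q.1 q.2 ∂μ :=
    integral_mono_of_nonneg (hμ.ae_mem.mono hΛ₀) (hμ.integrable_min.const_mul K)
      (hμ.ae_mem.mono hΛK)
  rw [integral_const_mul] at hint
  exact (div_le_iff₀ hμ.integral_min_pos).2 hint

end IsTailGenMeasure

lemma isTailGenMeasure_dirac {q : ℝ × ℝ} (h₁ : q.1 ∈ Ioc (0:ℝ) 1) (h₂ : q.2 ∈ Ioc (0:ℝ) 1) :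
    IsTailGenMeasure (Measure.dirac q) := by
  refine ⟨inferInstance, ?_, ?_⟩
  · rw [Measure.dirac_apply, indicator_of_notMem (not_not.2 ⟨Ioc_subset_Icc_self h₁,
      Ioc_subset_Icc_self h₂⟩)]
  · rw [Measure.dirac_apply, indicator_of_notMem (by simp [h₁.1.ne', h₂.1.ne'])]
    exact zero_lt_one

lemma tdm_dirac (Λ : ℝ → ℝ → ℝ) (q : ℝ × ℝ) :
    tdm Λ (Measure.dirac q) = Λ q.1 q.2 / min q.1 q.2 := by
  rw [tdm, integral_dirac, integral_dirac]

namespace HasTDF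

lemma apply_nonneg (hC : IsCopula C) (hΛ : HasTDF C Λ) {u v : ℝ} (hu : 0 ≤ u) (hv : 0 ≤ v) :
    0 ≤ Λ u v :=
  ge_of_tendsto (hΛ u v hu hv) <| by
    filter_upwards [self_mem_nhdsWithin, eventually_mul_mem_Icc hu, eventually_mul_mem_Icc hv]
      with p hp hpu hpv
    exact div_nonneg (hC.1 _ hpu _ hpv).1 (le_of_lt hp)

lemma apply_le_min (hC : IsCopula C) (hΛ : HasTDF C Λ) {u v : ℝ} (hu : 0 ≤ u) (hv : 0 ≤ v) :
    Λ u v ≤ min u v :=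
  le_of_tendsto (hΛ u v hu hv) <| by
    filter_upwards [self_mem_nhdsWithin, eventually_mul_mem_Icc hu, eventually_mul_mem_Icc hv]
      with p hp hpu hpv
    have hp : 0 < p := hp
    rw [div_le_iff₀ hp, min_mul_of_nonneg _ _ hp.le, mul_comm u, mul_comm v]
    exact le_min (hC.le_left hpu hpv) (hC.le_right hpu hpv)

lemma apply_mul (hΛ : HasTDF C Λ) {t u v : ℝ} (ht : 0 < t) (hu : 0 ≤ u) (hv : 0 ≤ v) :
    Λ (t * u) (t * v) = t * Λ u v := by
  have hscale : Tendsto (fun p : ℝ => p * t) (𝓝[>] 0) (𝓝[>] 0) := by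
    simpa using Filter.TendstoNhdsWithinIoi.mul_const ht (tendsto_id (x := 𝓝[>] (0:ℝ)))
  have hlim := ((hΛ u v hu hv).comp hscale).const_mul t
  refine tendsto_nhds_unique (hΛ _ _ (by positivity) (by positivity)) (hlim.congr' ?_)
  filter_upwards [self_mem_nhdsWithin] with p hp
  have hp : p ≠ 0 := ne_of_gt hp
  simp only [Function.comp_apply, mul_assoc, mul_comm t]
  field_simp

lemma abs_sub_le (hC : IsCopula C) (hΛ : HasTDF C Λ) {u u' v v' : ℝ} (hu : 0 ≤ u) (hu' : 0 ≤ u')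
    (hv : 0 ≤ v) (hv' : 0 ≤ v') : |Λ u v - Λ u' v'| ≤ |u - u'| + |v - v'| := by
  refine le_of_tendsto ((hΛ u v hu hv).sub (hΛ u' v' hu' hv')).abs ?_
  filter_upwards [self_mem_nhdsWithin, eventually_mul_mem_Icc hu, eventually_mul_mem_Icc hu',
    eventually_mul_mem_Icc hv, eventually_mul_mem_Icc hv'] with p hp h₁ h₂ h₃ h₄
  have hp : 0 < p := hp
  rw [← sub_div, abs_div, abs_of_pos hp, div_le_iff₀ hp]
  calc |C (p * u) (p * v) - C (p * u') (p * v')| ≤ |p * u - p * u'| + |p * v - p * v'| :=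
        hC.abs_sub_le h₁ h₂ h₃ h₄
    _ = (|u - u'| + |v - v'|) * p := by
        rw [← mul_sub, ← mul_sub, abs_mul, abs_mul, abs_of_pos hp]; ring

lemma continuousOn (hC : IsCopula C) (hΛ : HasTDF C Λ) :
    ContinuousOn (fun q : ℝ × ℝ => Λ q.1 q.2) (Ici 0 ×ˢ Ici 0) := by
  refine (LipschitzOnWith.of_dist_le_mul (K := 2) fun x hx y hy => ?_).continuousOn
  have h₁ : |x.1 - y.1| ≤ dist x y := by rw [← Real.dist_eq, Prod.dist_eq]; exact le_max_left _ _
  have h₂ : |x.2 - y.2| ≤ dist x y := by rw [← Real.dist_eq, Prod.dist_eq]; exact le_max_right _ _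
  rw [Real.dist_eq, NNReal.coe_ofNat]
  linarith [hΛ.abs_sub_le hC hx.1 hy.1 hx.2 hy.2]

lemma exists_forall_apply_one_div_le (hC : IsCopula C) (hΛ : HasTDF C Λ) :
    ∃ a, 0 < a ∧ ∀ b, 0 < b → Λ b (1 / b) ≤ Λ a (1 / a) := by
  -- `b = exp t` turns the two ends of `(0, ∞)` into the cocompact filter of `ℝ`
  set g : ℝ → ℝ := fun t => Λ (Real.exp t) (1 / Real.exp t)
  have hg : Continuous g := (hΛ.continuousOn hC).comp_continuous
    (f := fun t => (Real.exp t, 1 / Real.exp t)) (by fun_prop (disch := exact Real.exp_ne_zero))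
    fun t => ⟨(Real.exp_pos t).le, (one_div_pos.2 (Real.exp_pos t)).le⟩
  have hg0 : 0 ≤ g := fun t => hΛ.apply_nonneg hC (Real.exp_pos t).le (by positivity)
  have hdecay : Tendsto (fun t : ℝ => Real.exp (-|t|)) (cocompact ℝ) (𝓝 0) :=
    Real.tendsto_exp_neg_atTop_nhds_zero.comp
      ((tendsto_norm_cocompact_atTop (E := ℝ)).congr Real.norm_eq_abs)
  have hlim : Tendsto g (cocompact ℝ) (𝓝 0) :=
    tendsto_of_tendsto_of_tendsto_of_le_of_le tendsto_const_nhds hdecay hg0 fun t =>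
      (hΛ.apply_le_min hC (Real.exp_pos t).le (by positivity)).trans (min_exp_one_div_exp_le t)
  obtain ⟨t, ht⟩ := hg.exists_forall_ge_of_tendsto_cocompact_zero hg0 hlim
  refine ⟨Real.exp t, Real.exp_pos t, fun b hb => ?_⟩
  simpa [g, Real.exp_log hb] using ht (Real.log b)

lemma div_min_mul (hΛ : HasTDF C Λ) {t u v : ℝ} (ht : 0 < t) (hu : 0 ≤ u) (hv : 0 ≤ v) :
    Λ (t * u) (t * v) / min (t * u) (t * v) = Λ u v / min u v := by
  rw [hΛ.apply_mul ht hu hv, ← mul_min_of_nonneg _ _ ht.le, mul_div_mul_left _ _ ht.ne']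

lemma le_mul_min (hC : IsCopula C) (hΛ : HasTDF C Λ) {K : ℝ}
    (hK : ∀ b, 0 < b → Λ b (1 / b) / min b (1 / b) ≤ K) {u v : ℝ} (hu : 0 ≤ u) (hv : 0 ≤ v) :
    Λ u v ≤ K * min u v := by
  by_cases h0 : min u v = 0
  · rw [h0, mul_zero]
    exact h0 ▸ hΛ.apply_le_min hC hu hv
  obtain ⟨hu₀, hv₀⟩ := lt_min_iff.1 ((le_min hu hv).lt_of_ne' h0)
  obtain ⟨t, b, ht, hb, rfl, rfl⟩ := exists_eq_mul_and_eq_mul_one_div hu₀ hv₀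
  rw [← div_le_iff₀ (lt_min hu₀ hv₀), hΛ.div_min_mul ht hb.le (by positivity)]
  exact hK b hb

lemma bddAbove_div_min (hC : IsCopula C) (hΛ : HasTDF C Λ) :
    BddAbove {x : ℝ | ∃ b : ℝ, 0 < b ∧ x = Λ b (1 / b) / min b (1 / b)} := by
  refine ⟨1, ?_⟩
  rintro _ ⟨b, hb, rfl⟩
  exact div_le_one_of_le₀ (hΛ.apply_le_min hC hb.le (by positivity)) (by positivity)

lemma sSup_div_min_eq_sSup_tdm (hC : IsCopula C) (hΛ : HasTDF C Λ) :
    sSup {x : ℝ | ∃ b : ℝ, 0 < b ∧ x = Λ b (1 / b) / min b (1 / b)} =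
      sSup {x : ℝ | ∃ μ : Measure (ℝ × ℝ), IsTailGenMeasure μ ∧ x = tdm Λ μ} := by
  have hbdd := hΛ.bddAbove_div_min hC
  have hsub : {x : ℝ | ∃ b : ℝ, 0 < b ∧ x = Λ b (1 / b) / min b (1 / b)} ⊆
      {x : ℝ | ∃ μ : Measure (ℝ × ℝ), IsTailGenMeasure μ ∧ x = tdm Λ μ} := by
    rintro _ ⟨b, hb, rfl⟩
    set s := min b (1 / b)
    have hs : 0 < s := lt_min hb (one_div_pos.2 hb)
    -- the ray through `(b, 1/b)` meets `(0,1]²` at `s • (b, 1/b)`, where `λ_μ` of the Dirac mass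
    -- is the ratio `Λ / min` at `(b, 1/b)`
    have h₁ : s * b ≤ 1 :=
      (mul_le_mul_of_nonneg_right (min_le_right _ _) hb.le).trans_eq (one_div_mul_cancel hb.ne')
    have h₂ : s * (1 / b) ≤ 1 :=
      (mul_le_mul_of_nonneg_right (min_le_left _ _) (by positivity)).trans_eq
        (mul_one_div_cancel hb.ne')
    refine ⟨Measure.dirac (s * b, s * (1 / b)),
      isTailGenMeasure_dirac ⟨by positivity, h₁⟩ ⟨by positivity, h₂⟩, ?_⟩
    rw [tdm_dirac, hΛ.div_min_mul hs hb.le (by positivity)]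
  have hle : ∀ x ∈ {x : ℝ | ∃ μ : Measure (ℝ × ℝ), IsTailGenMeasure μ ∧ x = tdm Λ μ},
      x ≤ sSup {x : ℝ | ∃ b : ℝ, 0 < b ∧ x = Λ b (1 / b) / min b (1 / b)} := by
    rintro _ ⟨μ, hμ, rfl⟩
    exact hμ.tdm_le (fun q hq => hΛ.apply_nonneg hC hq.1.1 hq.2.1) fun q hq =>
      hΛ.le_mul_min hC (fun b hb => le_csSup hbdd ⟨b, hb, rfl⟩) hq.1.1 hq.2.1
  have hne : {x : ℝ | ∃ b : ℝ, 0 < b ∧ x = Λ b (1 / b) / min b (1 / b)}.Nonempty :=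
    ⟨_, 1, one_pos, rfl⟩
  exact le_antisymm (csSup_le_csSup ⟨_, hle⟩ hne hsub) (csSup_le (hne.mono hsub) hle)

end HasTDF

theorem maximal_tail_dependence_inequalities (C Λ : ℝ → ℝ → ℝ)
    (hC : IsCopula C) (hΛ : HasTDF C Λ) :
    let chiBar : ℝ := sSup {x : ℝ | ∃ b : ℝ, 0 < b ∧ x = Λ b (1 / b)}
    let A : Set ℝ := {a : ℝ | 0 < a ∧ ∀ b : ℝ, 0 < b → Λ b (1 / b) ≤ Λ a (1 / a)}
    let mBar : ℝ := sSup {x : ℝ | ∃ a ∈ A, x = min a (1 / a)}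
    let kappaBar : ℝ := sSup {x : ℝ | ∃ b : ℝ, 0 < b ∧ x = Λ b (1 / b) / min b (1 / b)}
    let lamBar : ℝ := sSup {x : ℝ | ∃ μ : Measure (ℝ × ℝ), IsTailGenMeasure μ ∧ x = tdm Λ μ}
    (∃ a, a ∈ A) ∧ 0 < mBar ∧
    Λ 1 1 ≤ chiBar ∧ chiBar ≤ chiBar / mBar ∧ chiBar / mBar ≤ kappaBar ∧
    kappaBar = lamBar := by
  intro chiBar A mBar kappaBar lamBar
  obtain ⟨a, ha, hmax⟩ := hΛ.exists_forall_apply_one_div_le hC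
  have hchi : chiBar = Λ a (1 / a) :=
    IsGreatest.csSup_eq ⟨⟨a, ha, rfl⟩, by rintro _ ⟨b, hb, rfl⟩; exact hmax b hb⟩
  have hmin_a : 0 < min a (1 / a) := lt_min ha (one_div_pos.2 ha)
  have hm_a : min a (1 / a) ≤ mBar :=
    le_csSup ⟨1, by rintro _ ⟨b, hb, rfl⟩; exact min_one_div_le_one hb.1⟩ ⟨a, ⟨ha, hmax⟩, rfl⟩
  have hm_le : mBar ≤ 1 :=
    csSup_le ⟨_, a, ⟨ha, hmax⟩, rfl⟩ (by rintro _ ⟨b, hb, rfl⟩; exact min_one_div_le_one hb.1)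
  have hm_pos : 0 < mBar := hmin_a.trans_le hm_a
  have hfa : 0 ≤ Λ a (1 / a) := hΛ.apply_nonneg hC ha.le (by positivity)
  have hchi_nonneg : 0 ≤ chiBar := hchi ▸ hfa
  have hkappa : Λ a (1 / a) / min a (1 / a) ≤ kappaBar :=
    le_csSup (hΛ.bddAbove_div_min hC) ⟨a, ha, rfl⟩
  have hkappa_nonneg : 0 ≤ kappaBar := (div_nonneg hfa hmin_a.le).trans hkappa
  refine ⟨⟨a, ha, hmax⟩, hm_pos, ?_, le_div_self hchi_nonneg hm_pos hm_le, ?_,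
    hΛ.sSup_div_min_eq_sSup_tdm hC⟩
  · simpa [hchi] using hmax 1 one_pos
  · rw [div_le_iff₀ hm_pos, hchi]
    calc Λ a (1 / a) ≤ kappaBar * min a (1 / a) := (div_le_iff₀ hmin_a).1 hkappa
      _ ≤ kappaBar * mBar := mul_le_mul_of_nonneg_left hm_a hkappa_nonneg
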